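/- Let G be a non-trivial group with a compression family 𝒞 for G, and let H = ⟨⋃𝒞⟩. Suppose that H is semi-transitive on 𝒞 by conjugation. Then: (1) D(H) acts transitively on every H-orbit on 𝒞, i.e. for every A ∈ 𝒞 and h ∈ H there is d ∈ D(H) with dAd⁻¹ = hAh⁻¹; and (2) D(H) is the smallest non-trivial subgroup K of G normalised by H with the property (*): there exists A ∈ 𝒞 such that for every g ∈ G there is k ∈ K for which [kAk⁻¹, gAg⁻¹] = {1}. That is, D(H) is non-trivial, is normalised by H, satisfies (*), and is contained in every non-trivial subgroup of G normalised by H that satisfies (*). -/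

import Mathlib

namespace Paper

variable {G : Type*} [Group G]

/-- Conjugate of a subgroup: `g A g⁻¹`. -/
def conjS (g : G) (A : Subgroup G) : Subgroup G := A.map (MulAut.conj g).toMonoidHom

/-- The family is invariant under conjugation in `G`. -/
def ConjInvariant (C : Set (Subgroup G)) : Prop := ∀ (g : G), ∀ A ∈ C, conjS g A ∈ C

/-- Condition (A): every member of the family is non-abelian. -/
def CondA (C : Set (Subgroup G)) : Prop :=
  ∀ A ∈ C, ∃ a ∈ A, ∃ b ∈ A, a * b ≠ b * a

/-- Condition (B): for every nontrivial element `g` of `H` there is a member `A` of the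
family with `[A, gAg⁻¹] = 1`. -/
def CondB (C : Set (Subgroup G)) (H : Subgroup G) : Prop :=
  ∀ g ∈ H, g ≠ 1 → ∃ A ∈ C, ⁅A, conjS g A⁆ = (⊥ : Subgroup G)

/-- Condition (C): `H` is semi-transitive on the family. -/
def CondC (C : Set (Subgroup G)) (H : Subgroup G) : Prop :=
  ∀ A ∈ C, ∀ B ∈ C, ∃ g ∈ H, conjS g A ≤ B

/-- Condition (D): the family is joinable. -/
def CondD (C : Set (Subgroup G)) : Prop :=
  ∀ A ∈ C, ∀ B ∈ C, ∀ C' ∈ C, ⁅A, C'⁆ = (⊥ : Subgroup G) → ¬ C' ≤ B →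
    ∃ D ∈ C, A ⊔ B ≤ D

/-- Condition (E): the family is shiftable over `H`: for each `A` in the family there is
`g ∈ H` and a homomorphism from the unrestricted direct product `∏_{i ≥ 1} A` into `H`
restricting to the identity on the first factor, which `g` conjugates by the shift. -/
def CondE (C : Set (Subgroup G)) (H : Subgroup G) : Prop :=
  ∀ A ∈ C, ∃ g ∈ H, ∃ φ : (ℕ → A) →* G,
    (∀ f : ℕ → A, φ f ∈ H) ∧
    (∀ a : A, φ (fun i => if i = 0 then a else 1) = (a : G)) ∧
    (∀ f : ℕ → A, g * φ f * g⁻¹ = φ (fun i => match i with | 0 => 1 | (n+1) => f n))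

/-- Conditions (A)–(C): a compression family for `H`. -/
def IsCompressionFamily (C : Set (Subgroup G)) (H : Subgroup G) : Prop :=
  ConjInvariant C ∧ CondA C ∧ CondB C H ∧ CondC C H

/-- Conditions (A)–(D): a joinable compression family for `H`. -/
def IsJoinableCompressionFamily (C : Set (Subgroup G)) (H : Subgroup G) : Prop :=
  IsCompressionFamily C H ∧ CondD C

/-- Conditions (A)–(E): a shift-joinable compression family for `H`. -/
def IsShiftJoinableCompressionFamily (C : Set (Subgroup G)) (H : Subgroup G) : Prop :=
  IsJoinableCompressionFamily C H ∧ CondE C H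

/-!
Write `H = sSup C` and `D = ⁅H, H⁆`. Semi-transitivity gives `H = D * A` for every `A ∈ C`: a
generator `b ∈ B` with `g B g⁻¹ ≤ A` factors as `⁅b, g⁆ * (g b g⁻¹)`. So every `H`-conjugate of
`A` is a `D`-conjugate, which is the transitivity claim, and it upgrades the `H`-conjugate of `A`
commuting with `g A g⁻¹` (found via condition (B) and semi-transitivity) to a `D`-conjugate.
For minimality, (*) for `K` and semi-transitivity show that any two members of `C` commute once
one of them is conjugated by an element of `K`; as `H` normalises `K`, the generators of `H`
commute modulo `K`, whence `D ≤ K`.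
-/

open scoped Pointwise commutatorElement
open Subgroup

lemma conjS_eq_smul (g : G) (A : Subgroup G) : conjS g A = MulAut.conj g • A := rfl

lemma conjS_mul (g h : G) (A : Subgroup G) : conjS (g * h) A = conjS g (conjS h A) := by
  simp only [conjS_eq_smul, map_mul, mul_smul]

lemma conjS_mono (g : G) {A B : Subgroup G} (h : A ≤ B) : conjS g A ≤ conjS g B :=
  map_mono h

lemma conjS_eq_self_iff {g : G} {A : Subgroup G} : conjS g A = A ↔ g ∈ normalizer (A : Set G) :=
  mem_normalizer_iff_map_conj_eq.symm

lemma commutator_conjS_eq_bot_iff (g : G) (A B : Subgroup G) :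
    ⁅conjS g A, conjS g B⁆ = ⊥ ↔ ⁅A, B⁆ = ⊥ := by
  rw [conjS, conjS, ← map_commutator, map_eq_bot_iff_of_injective _ (MulAut.conj g).injective]

lemma conjS_le_iff {g : G} {A B : Subgroup G} : conjS g A ≤ B ↔ A ≤ conjS g⁻¹ B := by
  rw [conjS_eq_smul, conjS_eq_smul, map_inv, pointwise_smul_subset_iff]

lemma commutator_eq_bot_of_le {A B A' B' : Subgroup G} (hA : A ≤ A') (hB : B ≤ B')
    (h : ⁅A', B'⁆ = ⊥) : ⁅A, B⁆ = ⊥ :=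
  le_bot_iff.1 (h ▸ commutator_mono hA hB)

section Modulo

variable {K : Subgroup G}

lemma commutatorElement_mem_of_mem_normalizer {k x : G} (hk : k ∈ K)
    (hx : x ∈ normalizer (K : Set G)) : ⁅k, x⁆ ∈ K := by
  rw [show ⁅k, x⁆ = k * (x * k⁻¹ * x⁻¹) by group]
  exact K.mul_mem hk ((mem_normalizer_iff.1 hx _).1 (K.inv_mem hk))

lemma commutatorElement_mem_of_conj_commutatorElement_eq_one {k x y : G} (hk : k ∈ K)
    (hx : x ∈ normalizer (K : Set G)) (hy : y ∈ normalizer (K : Set G))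
    (hcomm : ⁅k * x * k⁻¹, y⁆ = 1) : ⁅x, y⁆ ∈ K := by
  set c := ⁅k, x⁆
  have hc : c ∈ K := commutatorElement_mem_of_mem_normalizer hk hx
  have key : ⁅x, y⁆ = c⁻¹ * ⁅k * x * k⁻¹, y⁆ * ⁅c, y⁆⁻¹ * c := by
    simp only [c, commutatorElement_def]; group
  rw [key, hcomm, mul_one]
  exact K.mul_mem (K.mul_mem (K.inv_mem hc)
    (K.inv_mem (commutatorElement_mem_of_mem_normalizer hc hy))) hc

def centralizerModulo (K : Subgroup G) (s : Set G) : Subgroup G where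
  carrier := {x | x ∈ normalizer (K : Set G) ∧ ∀ y ∈ s, ⁅x, y⁆ ∈ K}
  one_mem' := ⟨one_mem _, fun y _ => by simp⟩
  mul_mem' := by
    rintro x₁ x₂ ⟨hx₁, h₁⟩ ⟨hx₂, h₂⟩
    refine ⟨mul_mem hx₁ hx₂, fun y hy => ?_⟩
    rw [commutatorElement_mul_left_eq_conj_mul]
    exact K.mul_mem ((mem_normalizer_iff.1 hx₁ _).1 (h₂ y hy)) (h₁ y hy)
  inv_mem' := by
    rintro x ⟨hx, h⟩
    refine ⟨inv_mem hx, fun y hy => ?_⟩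
    rw [commutatorElement_inv_left, ← commutatorElement_inv]
    simpa using (mem_normalizer_iff.1 (inv_mem hx) _).1 (K.inv_mem (h y hy))

lemma commutator_sSup_le {C : Set (Subgroup G)}
    (hN : (sSup C : Subgroup G) ≤ normalizer (K : Set G))
    (hgen : ∀ B ∈ C, ∀ B' ∈ C, ∀ b ∈ B, ∀ b' ∈ B', ⁅b, b'⁆ ∈ K) :
    ⁅sSup C, sSup C⁆ ≤ K := by
  set gens := ⋃ B ∈ C, (B : Set G)
  have mem_gens {B} (hB : B ∈ C) {b} (hb : b ∈ B) : b ∈ gens := Set.mem_biUnion hB hb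
  have hN' {B} (hB : B ∈ C) {b} (hb : b ∈ B) : b ∈ normalizer (K : Set G) :=
    hN (le_sSup hB hb)
  have h₁ : sSup C ≤ centralizerModulo K gens := sSup_le fun B hB b hb =>
    ⟨hN' hB hb, fun y hy => by
      obtain ⟨B', hB', hy⟩ := Set.mem_iUnion₂.1 hy
      exact hgen B hB B' hB' b hb y hy⟩
  have h₂ : sSup C ≤ centralizerModulo K (sSup C : Subgroup G) := sSup_le fun B hB b hb =>
    ⟨hN' hB hb, fun x hx => by
      rw [← commutatorElement_inv]
      exact K.inv_mem ((h₁ hx).2 b (mem_gens hB hb))⟩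
  exact commutator_le.2 fun x hx y hy => (h₂ hx).2 y hy

end Modulo

section CompressionFamily

variable {C : Set (Subgroup G)}

lemma le_commutator_sup_of_condC (hsemi : CondC C (sSup C)) {A : Subgroup G} (hA : A ∈ C) :
    sSup C ≤ ⁅sSup C, sSup C⁆ ⊔ A := by
  refine sSup_le fun B hB b hb => ?_
  obtain ⟨g, hg, hgB⟩ := hsemi B hB A hA
  have hb' : ⁅b, g⁆ * (g * b * g⁻¹) = b := by rw [commutatorElement_def]; group
  rw [← hb']
  exact mul_mem_sup (commutator_mem_commutator (le_sSup hB hb) hg)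
    (hgB ⟨b, hb, rfl⟩)

lemma exists_mem_commutator_conjS_eq (hsemi : CondC C (sSup C)) {A : Subgroup G} (hA : A ∈ C)
    {h : G} (hh : h ∈ sSup C) : ∃ d ∈ ⁅sSup C, sSup C⁆, conjS d A = conjS h A := by
  have hAN : A ≤ normalizer ((⁅sSup C, sSup C⁆ : Subgroup G) : Set G) :=
    (le_sSup hA).trans (normalizer_commutator_ge_left _ _)
  have hmem : h ∈ (↑(⁅sSup C, sSup C⁆ ⊔ A) : Set G) := le_commutator_sup_of_condC hsemi hA hh
  rw [coe_mul_of_right_le_normalizer_left _ _ hAN] at hmem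
  obtain ⟨d, hd, a, ha, rfl⟩ := hmem
  refine ⟨d, hd, ?_⟩
  rw [conjS_mul, conjS_eq_self_iff.2 (le_normalizer ha)]

lemma commutator_sSup_ne_bot (hA : CondA C) (hne : C.Nonempty) : ⁅sSup C, sSup C⁆ ≠ ⊥ := by
  obtain ⟨A, hAC⟩ := hne
  obtain ⟨a, ha, b, hb, hab⟩ := hA A hAC
  intro hbot
  have hmem := commutator_mem_commutator (le_sSup hAC ha) (le_sSup hAC hb)
  rw [hbot, mem_bot, commutatorElement_eq_one_iff_mul_comm] at hmem
  exact hab hmem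

lemma exists_mem_sSup_commutator_conjS_eq_bot (hinv : ConjInvariant C)
    (hsemi : CondC C (sSup C)) {A₀ : Subgroup G} (hA₀ : A₀ ∈ C) {s : G} (hs : ⁅A₀, conjS s A₀⁆ = ⊥)
    {A : Subgroup G} (hA : A ∈ C) (g : G) :
    ∃ h ∈ sSup C, ⁅conjS h A, conjS g A⁆ = ⊥ := by
  obtain ⟨t, ht, htA⟩ := hsemi (conjS g A) (hinv g A hA) (conjS s A₀) (hinv s A₀ hA₀)
  obtain ⟨u, hu, huA⟩ := hsemi A hA A₀ hA₀
  refine ⟨t⁻¹ * u, mul_mem (inv_mem ht) hu, ?_⟩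
  rw [← commutator_conjS_eq_bot_iff t, ← conjS_mul, mul_inv_cancel_left]
  exact commutator_eq_bot_of_le huA htA hs

lemma exists_mem_commutator_conjS_eq_bot {K : Subgroup G} (hsemi : CondC C (sSup C))
    (hN : sSup C ≤ normalizer (K : Set G)) {A : Subgroup G} (hA : A ∈ C)
    (hstar : ∀ g : G, ∃ k ∈ K, ⁅conjS k A, conjS g A⁆ = ⊥) {B B' : Subgroup G}
    (hB : B ∈ C) (hB' : B' ∈ C) : ∃ k ∈ K, ⁅conjS k B, B'⁆ = ⊥ := by
  obtain ⟨v, hv, hvB⟩ := hsemi B hB A hA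
  obtain ⟨w, hw, hwB'⟩ := hsemi B' hB' A hA
  obtain ⟨k, hk, hkA⟩ := hstar (v * w⁻¹)
  refine ⟨v⁻¹ * k * v, by simpa using (mem_normalizer_iff.1 (hN (inv_mem hv)) k).1 hk, ?_⟩
  rw [← commutator_conjS_eq_bot_iff v⁻¹, ← conjS_mul, ← conjS_mul, inv_mul_cancel_left] at hkA
  refine commutator_eq_bot_of_le ?_ (conjS_le_iff.1 hwB') hkA
  rw [conjS_mul]
  exact conjS_mono _ hvB

end CompressionFamily

/-- Proposition: let 𝒞 be a compression family for `G`, `H = ⟨⋃𝒞⟩`, and suppose `H` is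
semi-transitive on 𝒞. Then (1) `D(H)` acts transitively on every `H`-orbit on 𝒞, and
(2) `D(H)` is the smallest non-trivial `H`-invariant subgroup `K` of `G` satisfying
property (*): there is `A ∈ 𝒞` such that for all `g ∈ G` there is `k ∈ K` with
`[kAk⁻¹, gAg⁻¹] = 1`. -/
theorem derived_transitive_and_minimal [Nontrivial G] (C : Set (Subgroup G))
    (hC : IsCompressionFamily C (⊤ : Subgroup G))
    (H : Subgroup G) (hH : H = sSup C) (hsemi : CondC C H) :
    (∀ A ∈ C, ∀ h ∈ H, ∃ d ∈ (⁅H, H⁆ : Subgroup G), conjS d A = conjS h A) ∧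
      (⁅H, H⁆ : Subgroup G) ≠ ⊥ ∧
      (∀ h ∈ H, conjS h (⁅H, H⁆ : Subgroup G) = ⁅H, H⁆) ∧
      (∃ A ∈ C, ∀ g : G, ∃ k ∈ (⁅H, H⁆ : Subgroup G),
        ⁅conjS k A, conjS g A⁆ = (⊥ : Subgroup G)) ∧
      (∀ K : Subgroup G, K ≠ ⊥ → (∀ h ∈ H, conjS h K = K) →
        (∃ A ∈ C, ∀ g : G, ∃ k ∈ K, ⁅conjS k A, conjS g A⁆ = (⊥ : Subgroup G)) →
        (⁅H, H⁆ : Subgroup G) ≤ K) := by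
  obtain ⟨hinv, hnonab, hB, -⟩ := hC
  subst hH
  obtain ⟨s, hs⟩ := exists_ne (1 : G)
  obtain ⟨A₀, hA₀, hA₀s⟩ := hB s (mem_top s) hs
  refine ⟨fun A hA h hh => exists_mem_commutator_conjS_eq hsemi hA hh,
    commutator_sSup_ne_bot hnonab ⟨A₀, hA₀⟩,
    fun h hh => conjS_eq_self_iff.2 (normalizer_commutator_ge_left _ _ hh),
    ⟨A₀, hA₀, fun g => ?_⟩, fun K _ hK ⟨A, hA, hstar⟩ => ?_⟩
  · obtain ⟨h, hh, hcomm⟩ := exists_mem_sSup_commutator_conjS_eq_bot hinv hsemi hA₀ hA₀s hA₀ g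
    obtain ⟨d, hd, hdh⟩ := exists_mem_commutator_conjS_eq hsemi hA₀ hh
    exact ⟨d, hd, hdh ▸ hcomm⟩
  · have hN : sSup C ≤ normalizer (K : Set G) := fun h hh => conjS_eq_self_iff.1 (hK h hh)
    refine commutator_sSup_le hN fun B hB B' hB' b hb b' hb' => ?_
    obtain ⟨k, hk, hcomm⟩ := exists_mem_commutator_conjS_eq_bot hsemi hN hA hstar hB hB'
    exact commutatorElement_mem_of_conj_commutatorElement_eq_one hk (hN (le_sSup hB hb))
      (hN (le_sSup hB' hb')) (mem_bot.1 (hcomm ▸ commutator_mem_commutator ⟨b, hb, rfl⟩ hb'))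

end Paper
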